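/- arXiv:1902.08250 — 2 statements merged into one kernel-verified Lean document; each statement's English description precedes it below -/
import Mathlib

section
/- For every real number z and every real θ, the series ∑_{m=-∞}^{∞} i^m J_m(z) e^{i m θ} converges to e^{i z cos θ} (the Jacobi–Anger expansion). -/
open Real Complex

/-- Bessel function of the first kind of integer order, defined via the
integral representation `J_m(z) = (i^{-m}/(2π)) ∫_{-π}^{π} e^{i z cos θ} cos(m θ) dθ`. -/
noncomputable def besselJ (m : ℤ) (z : ℝ) : ℂ :=
  (Complex.I ^ (-m) / (2 * π)) *
    ∫ θ in (-π : ℝ)..π, Complex.exp (Complex.I * z * Real.cos θ) * (Real.cos (m * θ) : ℂ)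

/-! The function `θ ↦ e^{i z cos θ}` is smooth and `2π`-periodic, so two integrations by parts
bound its `n`-th Fourier coefficient by `C / n²`; its Fourier series therefore converges
absolutely, and pointwise to the function. Since `cos` is even, the sine part of
`e^{-inθ} = cos nθ - i sin nθ` integrates to zero, so the `n`-th coefficient is
`(1/2π) ∫ e^{i z cos θ} cos nθ dθ = i^n J_n(z)`. -/

open MeasureTheory AddCircle

theorem intervalIntegral.integral_eq_zero_of_odd {E : Type*} [NormedAddCommGroup E]
    [NormedSpace ℝ E] {g : ℝ → E} (hg : ∀ x, g (-x) = -g x) (a : ℝ) :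
    ∫ x in -a..a, g x = 0 := by
  have h := intervalIntegral.integral_comp_neg (a := -a) (b := a) g
  simp only [hg, intervalIntegral.integral_neg, neg_neg] at h
  have h2 : (2 : ℝ) • ∫ x in -a..a, g x = 0 := by
    rw [two_smul]; nth_rw 1 [← h]; exact neg_add_cancel _
  exact (smul_eq_zero.mp h2).resolve_left two_ne_zero

theorem AddCircle.norm_fourierCoeff_le {T : ℝ} [Fact (0 < T)] {E : Type*} [NormedAddCommGroup E]
    [NormedSpace ℂ E] {f : AddCircle T → E} {C : ℝ} (hf : ∀ x, ‖f x‖ ≤ C) (n : ℤ) :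
    ‖fourierCoeff f n‖ ≤ C :=
  (norm_integral_le_of_norm_le_const (ae_of_all _ fun x => by
    rw [norm_smul, fourier_apply, Circle.norm_coe, one_mul]; exact hf x)).trans_eq (by simp)

theorem Function.Periodic.deriv {𝕜 F : Type*} [NontriviallyNormedField 𝕜] [NormedAddCommGroup F]
    [NormedSpace 𝕜 F] {f : 𝕜 → F} {T : 𝕜} (hf : Periodic f T) : Periodic (deriv f) T :=
  fun x => by rw [← deriv_comp_add_const, show (fun x => f (x + T)) = f from funext hf]

theorem Function.Periodic.continuous_lift {α β : Type*} [AddGroup α] [TopologicalSpace α]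
    [TopologicalSpace β] {f : α → β} {T : α} (hf : Periodic f T) (hc : Continuous f) :
    Continuous hf.lift :=
  continuous_coinduced_dom.mpr hc

theorem Function.Periodic.lift_eq_liftIoc {T : ℝ} [Fact (0 < T)] {B : Type*} {f : ℝ → B}
    (hf : Periodic f T) (a : ℝ) : hf.lift = liftIoc T a f := by
  ext q
  rw [← coe_equivIoc (p := T) (a := a) (y := q), liftIoc_coe_apply (equivIoc T a q).2]
  rfl

namespace Function.Periodic

variable {T : ℝ} [hT : Fact (0 < T)] {f : ℝ → ℂ}

theorem fourierCoeff_lift_eq_fourierCoeffOn (hf : Periodic f T) (a : ℝ) :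
    fourierCoeff hf.lift = fourierCoeffOn (lt_add_of_pos_right a hT.out) f := by
  ext n
  rw [hf.lift_eq_liftIoc a, fourierCoeff_liftIoc_eq]

theorem fourierCoeff_lift_eq_mul_fourierCoeff_lift_deriv (hf : Periodic f T)
    (hd : ContDiff ℝ 1 f) {n : ℤ} (hn : n ≠ 0) :
    fourierCoeff hf.lift n = T / (2 * π * I * n) * fourierCoeff hf.deriv.lift n := by
  rw [hf.fourierCoeff_lift_eq_fourierCoeffOn 0, hf.deriv.fourierCoeff_lift_eq_fourierCoeffOn 0,
    fourierCoeffOn_of_hasDerivAt _ hn (fun x _ => (hd.differentiable one_ne_zero x).hasDerivAt)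
      (hd.continuous_deriv_one.intervalIntegrable _ _)]
  have h0 : f (0 + T) - f 0 = 0 := by rw [zero_add, hf.eq, sub_self]
  have h2πn : (2 * π * I * n : ℂ) ≠ 0 := by simp [hn, Real.pi_ne_zero]
  rw [h0]
  simp only [zero_add, ofReal_zero, sub_zero, mul_zero, zero_sub]
  field_simp

theorem summable_fourierCoeff_lift (hf : Periodic f T) (hd : ContDiff ℝ 2 f) :
    Summable (fourierCoeff hf.lift) := by
  have hd' : ContDiff ℝ 1 (_root_.deriv f) := hd.deriv'
  obtain ⟨C, hC⟩ := (isCompact_range (hf.deriv.deriv.continuous_lift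
    hd'.continuous_deriv_one)).isBounded.exists_norm_le
  have hdecay : ∀ n : ℤ, n ≠ 0 →
      ‖fourierCoeff hf.lift n‖ ≤ (T / (2 * π)) ^ 2 * C * (1 / (n : ℝ) ^ 2) := by
    intro n hn
    have hnorm : ‖(T : ℂ) / (2 * π * I * n) * (T / (2 * π * I * n))‖ =
        (T / (2 * π)) ^ 2 * (1 / (n : ℝ) ^ 2) := by
      simp only [norm_mul, norm_div, norm_real, norm_I, Complex.norm_ofNat, norm_intCast,
        Real.norm_eq_abs, abs_of_pos hT.out, abs_of_pos pi_pos, mul_one]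
      field_simp
      rw [sq_abs]
    rw [hf.fourierCoeff_lift_eq_mul_fourierCoeff_lift_deriv (hd.of_le one_le_two) hn,
      hf.deriv.fourierCoeff_lift_eq_mul_fourierCoeff_lift_deriv hd' hn, ← mul_assoc, norm_mul,
      hnorm, mul_right_comm]
    gcongr
    exact norm_fourierCoeff_le (fun x => hC _ (Set.mem_range_self x)) n
  refine Summable.of_norm_bounded_eventually
    ((summable_one_div_int_pow.mpr one_lt_two).mul_left ((T / (2 * π)) ^ 2 * C)) ?_
  filter_upwards [Filter.eventually_cofinite_ne 0] with n hn using hdecay n hn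

theorem hasSum_fourier_series_of_contDiff (hf : Periodic f T) (hd : ContDiff ℝ 2 f) (x : ℝ) :
    HasSum (fun n => fourierCoeff hf.lift n * fourier n (x : AddCircle T)) (f x) :=
  has_pointwise_sum_fourier_series_of_summable (f := ⟨hf.lift, hf.continuous_lift hd.continuous⟩)
    (hf.summable_fourierCoeff_lift hd) x

end Function.Periodic

instance fact_zero_lt_two_pi : Fact (0 < 2 * π) := ⟨two_pi_pos⟩

theorem periodic_exp_I_mul_cos (z : ℝ) :
    Function.Periodic (fun θ : ℝ => exp (I * z * Real.cos θ)) (2 * π) := fun θ => by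
  simp only [Real.cos_add_two_pi]

theorem contDiff_exp_I_mul_cos (z : ℝ) : ContDiff ℝ 2 (fun θ : ℝ => exp (I * z * Real.cos θ)) :=
  contDiff_exp.comp (contDiff_const.mul (ofRealCLM.contDiff.comp contDiff_cos))

theorem fourier_coe_two_pi (n : ℤ) (x : ℝ) :
    fourier n (x : AddCircle (2 * π)) = exp (I * n * x) := by
  rw [fourier_coe_apply]
  congr 1
  push_cast
  field_simp

theorem I_zpow_mul_besselJ (m : ℤ) (z : ℝ) :
    I ^ m * besselJ m z = (1 / (2 * π) : ℝ) •
      ∫ θ in -π..π, exp (I * z * Real.cos θ) * (Real.cos (m * θ) : ℂ) := by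
  rw [besselJ, ← mul_assoc, zpow_neg, mul_div_assoc', mul_inv_cancel₀ (zpow_ne_zero m I_ne_zero),
    real_smul]
  push_cast
  ring

theorem fourierCoeff_lift_exp_I_mul_cos (z : ℝ) (n : ℤ) :
    fourierCoeff (periodic_exp_I_mul_cos z).lift n = I ^ n * besselJ n z := by
  set g : ℝ → ℂ := fun θ => exp (I * z * Real.cos θ)
  have hcos : Continuous fun x => g x * (Real.cos (n * x) : ℂ) := by fun_prop
  have hsin : Continuous fun x => I * (g x * (Real.sin (n * x) : ℂ)) := by fun_prop
  have hodd : ∫ x in -π..π, g x * (Real.sin (n * x) : ℂ) = 0 :=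
    intervalIntegral.integral_eq_zero_of_odd (fun x => by
      simp only [g, Real.cos_neg, mul_neg, Real.sin_neg, ofReal_neg]) π
  rw [fourierCoeff_eq_intervalIntegral _ n (-π), I_zpow_mul_besselJ,
    show -π + 2 * π = π by ring]
  congr 1
  calc ∫ x in -π..π, fourier (-n) (x : AddCircle (2 * π)) • g x
      = ∫ x in -π..π, (g x * Real.cos (n * x) - I * (g x * Real.sin (n * x))) := by
        refine intervalIntegral.integral_congr fun x _ => ?_
        rw [smul_eq_mul, fourier_coe_two_pi,
          show I * ((-n : ℤ) : ℂ) * x = ((-(n * x) : ℝ) : ℂ) * I by push_cast; ring,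
          exp_mul_I, ← ofReal_cos, ← ofReal_sin, Real.cos_neg, Real.sin_neg, ofReal_neg]
        ring
    _ = ∫ x in -π..π, g x * Real.cos (n * x) := by
        rw [intervalIntegral.integral_sub (hcos.intervalIntegrable _ _)
          (hsin.intervalIntegrable _ _), intervalIntegral.integral_const_mul, hodd, mul_zero,
          sub_zero]

/-- Jacobi–Anger expansion: `e^{i z cos θ} = ∑_{m=-∞}^{∞} i^m J_m(z) e^{i m θ}`. -/
theorem jacobi_anger (z θ : ℝ) :
    HasSum (fun m : ℤ => Complex.I ^ m * besselJ m z * Complex.exp (Complex.I * m * θ))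
      (Complex.exp (Complex.I * z * Real.cos θ)) := by
  have h := (periodic_exp_I_mul_cos z).hasSum_fourier_series_of_contDiff
    (contDiff_exp_I_mul_cos z) θ
  simpa only [fourierCoeff_lift_exp_I_mul_cos, fourier_coe_two_pi] using h
end

section
/- For k > 0, α real with impedance factor pole at t = iα avoided, and x, y > 0, the shifted evanescent integral satisfies: ∫_c^∞ e^{−t y} e^{i x √(t²+k²)} (t + iα)/((t − iα)√(t²+k²)) dt = i e^{−c y} ∫_0^∞ e^{−λ x} e^{−iλ y} · e^{i x (√((c+iλ)²+k²) − iλ)} · ((c+iλ) + iα)/(((c+iλ) − iα) √((c+iλ)²+k²)) dλ, provided c > 0 and c > |α| (so the pole t = iα and branch points ±ik lie outside the rotated region) — here the square root is the principal branch. -/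
/-!
On the quarter-plane `Re z ≥ c, Im z ≥ 0` the integrand continues holomorphically: `z² + k²`
stays in the slit plane, so its principal root `w` is holomorphic there, with `Re w ≥ 0`.
From `(w - z)(w + z) = k²` and `Re (w + z) ≥ c` we get `Im w ≥ Im z - k²/c`, and
`|w|² = |z - ik| |z + ik| ≥ c²`; hence the integrand is `O(exp (-y Re z - x Im z))`.
Cauchy's theorem on the rectangles `[c, R] × [0, L]`, letting first `L → ∞` and then `R → ∞`,
turns the horizontal ray into the vertical one.
-/

open Real Complex MeasureTheory Set Filter Topology

def ExpDecayOnQuadrant (f : ℂ → ℂ) (c x y C : ℝ) : Prop :=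
  ∀ a b : ℝ, c ≤ a → 0 ≤ b → ‖f (a + b * I)‖ ≤ C * Real.exp (-y * a) * Real.exp (-x * b)

namespace ExpDecayOnQuadrant

variable {f : ℂ → ℂ} {c x y C : ℝ}

lemma integrableOn_vertical (hf : ExpDecayOnQuadrant f c x y C) (hx : 0 < x)
    (hcont : ContinuousOn f (Ici c ×ℂ Ici 0)) {a : ℝ} (ha : c ≤ a) :
    IntegrableOn (fun b : ℝ => f (a + b * I)) (Ioi 0) := by
  refine ((exp_neg_integrableOn_Ioi 0 hx).const_mul (C * Real.exp (-y * a))).mono' ?_ ?_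
  · refine (hcont.comp (by fun_prop) fun b hb => ?_).aestronglyMeasurable measurableSet_Ioi
    simpa [mem_reProdIm] using ⟨ha, le_of_lt hb⟩
  · filter_upwards [ae_restrict_mem measurableSet_Ioi] with b hb
    exact hf a b ha hb.le

lemma integrableOn_horizontal (hf : ExpDecayOnQuadrant f c x y C) (hy : 0 < y)
    (hcont : ContinuousOn f (Ici c ×ℂ Ici 0)) :
    IntegrableOn (fun t : ℝ => f t) (Ioi c) := by
  refine ((exp_neg_integrableOn_Ioi c hy).const_mul C).mono' ?_ ?_
  · refine (hcont.comp (by fun_prop) fun t ht => ?_).aestronglyMeasurable measurableSet_Ioi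
    simpa [mem_reProdIm] using le_of_lt ht
  · filter_upwards [ae_restrict_mem measurableSet_Ioi] with t ht
    simpa using hf t 0 ht.le le_rfl

lemma norm_integral_vertical_le (hf : ExpDecayOnQuadrant f c x y C) (hx : 0 < x) {a : ℝ}
    (ha : c ≤ a) :
    ‖∫ b in Ioi (0 : ℝ), f (a + b * I)‖ ≤ C * Real.exp (-y * a) / x := by
  calc ‖∫ b in Ioi (0 : ℝ), f (a + b * I)‖
      ≤ ∫ b in Ioi (0 : ℝ), C * Real.exp (-y * a) * Real.exp (-x * b) := by
        refine norm_integral_le_of_norm_le ((exp_neg_integrableOn_Ioi 0 hx).const_mul _) ?_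
        filter_upwards [ae_restrict_mem measurableSet_Ioi] with b hb
        exact hf a b ha hb.le
    _ = C * Real.exp (-y * a) / x := by
        rw [integral_const_mul, integral_exp_mul_Ioi (neg_lt_zero.mpr hx)]
        field_simp
        simp

lemma tendsto_integral_vertical (hf : ExpDecayOnQuadrant f c x y C) (hx : 0 < x) (hy : 0 < y) :
    Tendsto (fun a : ℝ => ∫ b in Ioi (0 : ℝ), f (a + b * I)) atTop (𝓝 0) := by
  have hmajorant : Tendsto (fun a : ℝ => C * Real.exp (-y * a) / x) atTop (𝓝 0) := by
    simpa using ((tendsto_exp_atBot.comp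
      (tendsto_id.const_mul_atTop_of_neg (neg_lt_zero.mpr hy))).const_mul C).div_const x
  refine squeeze_zero_norm' ?_ hmajorant
  filter_upwards [eventually_ge_atTop c] with a ha
  exact hf.norm_integral_vertical_le hx ha

lemma tendsto_integral_horizontal (hf : ExpDecayOnQuadrant f c x y C) (hx : 0 < x) (hy : 0 < y)
    {R : ℝ} (hR : c ≤ R) :
    Tendsto (fun L : ℝ => ∫ t in c..R, f (t + L * I)) atTop (𝓝 0) := by
  have hmajorant : Tendsto (fun L : ℝ => C * Real.exp (-y * c) * Real.exp (-x * L) * |R - c|)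
      atTop (𝓝 0) := by
    simpa using (((tendsto_exp_atBot.comp
      (tendsto_id.const_mul_atTop_of_neg (neg_lt_zero.mpr hx))).const_mul
        (C * Real.exp (-y * c))).mul_const |R - c|)
  refine squeeze_zero_norm' ?_ hmajorant
  filter_upwards [eventually_ge_atTop 0] with L hL
  refine intervalIntegral.norm_integral_le_of_norm_le_const fun t ht => ?_
  rw [uIoc_of_le hR] at ht
  refine (hf t L ht.1.le hL).trans ?_
  have hC : 0 ≤ C := (mul_nonneg_iff_of_pos_right (exp_pos (-y * c))).mp <| by
    simpa using (norm_nonneg _).trans (hf c 0 le_rfl le_rfl)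
  have hexp : Real.exp (-y * t) ≤ Real.exp (-y * c) := exp_le_exp.mpr (by nlinarith [ht.1])
  gcongr

lemma intervalIntegral_eq_sub (hf : ExpDecayOnQuadrant f c x y C) (hx : 0 < x) (hy : 0 < y)
    (hholo : DifferentiableOn ℂ f (Ici c ×ℂ Ici 0)) {R : ℝ} (hR : c ≤ R) :
    ∫ t in c..R, f t =
      I * (∫ b in Ioi (0 : ℝ), f (c + b * I)) - I * ∫ b in Ioi (0 : ℝ), f (R + b * I) := by
  have hrect : ∀ L : ℝ, 0 ≤ L → (∫ t in c..R, f t) - (∫ t in c..R, f (t + L * I)) +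
      I * (∫ b in (0 : ℝ)..L, f (R + b * I)) - I * (∫ b in (0 : ℝ)..L, f (c + b * I)) = 0 := by
    intro L hL
    have := integral_boundary_rect_eq_zero_of_differentiableOn f c (R + L * I) <| hholo.mono <| by
      refine reProdIm_subset_iff'.mpr (Or.inl ⟨?_, ?_⟩) <;>
        simp [uIcc_of_le, hR, hL, Icc_subset_Ici_self]
    simpa using this
  have hvert {a : ℝ} (ha : c ≤ a) := intervalIntegral_tendsto_integral_Ioi 0
    (hf.integrableOn_vertical hx hholo.continuousOn ha) tendsto_id
  have hlim := ((tendsto_const_nhds (x := ∫ t in c..R, f t)).sub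
    (hf.tendsto_integral_horizontal hx hy hR)).add
    (((hvert hR).const_mul I).sub ((hvert le_rfl).const_mul I))
  have hzero := tendsto_nhds_unique hlim <| (tendsto_const_nhds (x := (0 : ℂ))).congr' <| by
    filter_upwards [eventually_ge_atTop 0] with L hL
    rw [← hrect L hL, id]
    ring
  linear_combination hzero

theorem integral_Ioi_eq_I_mul_integral_vertical (hf : ExpDecayOnQuadrant f c x y C) (hx : 0 < x)
    (hy : 0 < y) (hholo : DifferentiableOn ℂ f (Ici c ×ℂ Ici 0)) :
    ∫ t in Ioi c, f t = I * ∫ b in Ioi (0 : ℝ), f (c + b * I) := by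
  have hlim := intervalIntegral_tendsto_integral_Ioi c
    (hf.integrableOn_horizontal hy hholo.continuousOn) tendsto_id
  have hsub : Tendsto (fun R : ℝ => ∫ t in c..R, f t) atTop
      (𝓝 (I * (∫ b in Ioi (0 : ℝ), f (c + b * I)) - I * 0)) := by
    refine Tendsto.congr' ?_
      ((tendsto_const_nhds (x := I * ∫ b in Ioi (0 : ℝ), f (c + b * I))).sub
        ((hf.tendsto_integral_vertical hx hy).const_mul I))
    filter_upwards [eventually_ge_atTop c] with R hR
    exact (hf.intervalIntegral_eq_sub hx hy hholo hR).symm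
  simpa using tendsto_nhds_unique hlim hsub

end ExpDecayOnQuadrant

lemma cpow_one_half_sq (u : ℂ) : (u ^ (1 / 2 : ℂ)) ^ 2 = u := by
  rw [one_div]
  exact cpow_ofNat_inv_pow u 2

lemma re_cpow_one_half_nonneg (u : ℂ) : 0 ≤ (u ^ (1 / 2 : ℂ)).re := by
  rw [one_div, cpow_inv_two_re]
  exact Real.sqrt_nonneg _

lemma norm_sub_mul_re_le_norm_sq_sub_sq {w z : ℂ} (hw : 0 ≤ w.re) :
    ‖w - z‖ * z.re ≤ ‖w ^ 2 - z ^ 2‖ := by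
  have hre : z.re ≤ ‖w + z‖ := by
    have := re_le_norm (w + z)
    rw [add_re] at this
    linarith
  rw [show w ^ 2 - z ^ 2 = (w - z) * (w + z) by ring, norm_mul]
  exact mul_le_mul_of_nonneg_left hre (norm_nonneg _)

lemma re_sq_le_norm_sq_add_sq (z : ℂ) (k : ℝ) : z.re ^ 2 ≤ ‖z ^ 2 + (k : ℂ) ^ 2‖ := by
  have hfac : z ^ 2 + (k : ℂ) ^ 2 = (z - k * I) * (z + k * I) := by
    ring_nf
    rw [I_sq]
    ring
  rw [hfac, norm_mul, ← sq_abs, sq]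
  exact mul_le_mul (by simpa using abs_re_le_norm (z - k * I))
    (by simpa using abs_re_le_norm (z + k * I)) (abs_nonneg _) (norm_nonneg _)

lemma sq_add_sq_mem_slitPlane {z : ℂ} (hz : 0 < z.re) (k : ℝ) :
    z ^ 2 + (k : ℂ) ^ 2 ∈ slitPlane := by
  rw [mem_slitPlane_iff]
  rcases eq_or_ne z.im 0 with him | him
  · left
    simp only [add_re, sq, mul_re, him, ofReal_re, ofReal_im]
    nlinarith
  · right
    simp only [add_im, sq, mul_im, ofReal_re, ofReal_im]
    intro h
    exact him (by nlinarith [mul_pos hz hz, sq_nonneg z.im])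

noncomputable def evanescentRoot (k : ℝ) (z : ℂ) : ℂ := (z ^ 2 + (k : ℂ) ^ 2) ^ (1 / 2 : ℂ)

lemma evanescentRoot_ofReal (k t : ℝ) :
    evanescentRoot k t = (Real.sqrt (t ^ 2 + k ^ 2) : ℂ) := by
  rw [Real.sqrt_eq_rpow, ofReal_cpow (by positivity), evanescentRoot]
  push_cast
  rfl

lemma re_le_norm_evanescentRoot (z : ℂ) (k : ℝ) : z.re ≤ ‖evanescentRoot k z‖ := by
  refine le_of_sq_le_sq ?_ (norm_nonneg _)
  rw [← norm_pow, evanescentRoot, cpow_one_half_sq]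
  exact re_sq_le_norm_sq_add_sq z k

lemma im_sub_le_im_evanescentRoot {z : ℂ} (hz : 0 < z.re) (k : ℝ) :
    z.im - k ^ 2 / z.re ≤ (evanescentRoot k z).im := by
  set w := evanescentRoot k z
  have hdist : ‖w - z‖ ≤ k ^ 2 / z.re := by
    rw [le_div_iff₀ hz]
    refine (norm_sub_mul_re_le_norm_sq_sub_sq (re_cpow_one_half_nonneg _)).trans_eq ?_
    rw [cpow_one_half_sq, add_sub_cancel_left, ← ofReal_pow, norm_real,
      Real.norm_of_nonneg (sq_nonneg k)]
  have him := (neg_abs_le (w - z).im).trans' (neg_le_neg (abs_im_le_norm (w - z)))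
  rw [sub_im] at him
  linarith

lemma differentiableAt_evanescentRoot {z : ℂ} (hz : 0 < z.re) (k : ℝ) :
    DifferentiableAt ℂ (evanescentRoot k) z :=
  (by fun_prop : DifferentiableAt ℂ (fun z : ℂ => z ^ 2 + (k : ℂ) ^ 2) z).cpow
    (differentiableAt_const _) (sq_add_sq_mem_slitPlane hz k)

lemma evanescentRoot_ne_zero {z : ℂ} (hz : 0 < z.re) (k : ℝ) : evanescentRoot k z ≠ 0 :=
  norm_pos_iff.mp (hz.trans_le (re_le_norm_evanescentRoot z k))

lemma norm_add_I_mul_div_sub_I_mul_le {z : ℂ} (hz : 0 < z.re) (α : ℝ) :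
    ‖(z + I * α) / (z - I * α)‖ ≤ 1 + 2 * |α| / z.re := by
  have hre : z.re ≤ ‖z - I * α‖ := by simpa using re_le_norm (z - I * α)
  have hne : z - I * α ≠ 0 := norm_pos_iff.mp (hz.trans_le hre)
  rw [show (z + I * α) / (z - I * α) = 1 + 2 * I * α / (z - I * α) by field_simp; ring]
  refine (norm_add_le _ _).trans ?_
  rw [norm_one, norm_div]
  gcongr
  simp

noncomputable def impedanceIntegrand (k α x y : ℝ) (z : ℂ) : ℂ :=
  Complex.exp (-z * y) * Complex.exp (I * x * evanescentRoot k z) *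
    ((z + I * α) / ((z - I * α) * evanescentRoot k z))

lemma differentiableAt_impedanceIntegrand {z : ℂ} (hz : 0 < z.re) (k α x y : ℝ) :
    DifferentiableAt ℂ (impedanceIntegrand k α x y) z := by
  have hW := differentiableAt_evanescentRoot hz k
  have hsub : z - I * α ≠ 0 := fun h => by simpa [sub_eq_zero.mp h] using hz.ne'
  unfold impedanceIntegrand
  exact ((by fun_prop : DifferentiableAt ℂ (fun z : ℂ => Complex.exp (-z * y)) z).mul
    (hW.const_mul _).cexp).mul ((differentiableAt_id.add_const _).div
      ((differentiableAt_id.sub_const _).mul hW) (mul_ne_zero hsub (evanescentRoot_ne_zero hz k)))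

lemma norm_impedanceIntegrand_le {k α x y c a : ℝ} (hx : 0 ≤ x) (hc : 0 < c) (ha : c ≤ a)
    (b : ℝ) :
    ‖impedanceIntegrand k α x y (a + b * I)‖ ≤
      (1 + 2 * |α| / c) / c * Real.exp (x * k ^ 2 / c) * Real.exp (-y * a) *
        Real.exp (-x * b) := by
  set z : ℂ := a + b * I
  set w := evanescentRoot k z
  have hre : z.re = a := by simp [z]
  have him : z.im = b := by simp [z]
  have ha0 : 0 < a := hc.trans_le ha
  have hexp : Real.exp (-(x * w.im)) ≤ Real.exp (x * k ^ 2 / c) * Real.exp (-x * b) := by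
    have hw := im_sub_le_im_evanescentRoot (hre ▸ ha0 : 0 < z.re) k
    rw [hre, him] at hw
    have : k ^ 2 / a ≤ k ^ 2 / c := by gcongr
    rw [← Real.exp_add, mul_div_assoc]
    gcongr
    nlinarith
  have hfactor : ‖(z + I * α) / (z - I * α)‖ / ‖w‖ ≤ (1 + 2 * |α| / c) / c := by
    have hratio := norm_add_I_mul_div_sub_I_mul_le (hre ▸ ha0 : 0 < z.re) α
    have hw := re_le_norm_evanescentRoot z k
    rw [hre] at hratio hw
    calc ‖(z + I * α) / (z - I * α)‖ / ‖w‖ ≤ (1 + 2 * |α| / a) / a := by gcongr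
      _ ≤ (1 + 2 * |α| / c) / c := by gcongr
  have hnorm : ‖impedanceIntegrand k α x y z‖ =
      Real.exp (-y * a) * Real.exp (-(x * w.im)) * (‖(z + I * α) / (z - I * α)‖ / ‖w‖) := by
    simp only [impedanceIntegrand, norm_mul, norm_div, Complex.norm_exp]
    simp [z, w, mul_comm, div_div]
  rw [hnorm]
  calc _ ≤ Real.exp (-y * a) * (Real.exp (x * k ^ 2 / c) * Real.exp (-x * b)) *
        ((1 + 2 * |α| / c) / c) := by gcongr
    _ = _ := by ring

lemma impedanceIntegrand_ofReal (k α x y t : ℝ) :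
    impedanceIntegrand k α x y t =
      Complex.exp (-(t : ℂ) * y) * Complex.exp (I * x * Real.sqrt (t ^ 2 + k ^ 2)) *
        (((t : ℂ) + I * α) / (((t : ℂ) - I * α) * (Real.sqrt (t ^ 2 + k ^ 2) : ℂ))) := by
  rw [impedanceIntegrand, evanescentRoot_ofReal]

lemma impedanceIntegrand_vertical (k α x y c l : ℝ) :
    impedanceIntegrand k α x y (c + l * I) = Complex.exp (-(c : ℂ) * y) *
      (Complex.exp (-(l : ℂ) * x) * Complex.exp (-I * l * y) *
        Complex.exp (I * x * (((c + I * l) ^ 2 + (k : ℂ) ^ 2) ^ (1 / 2 : ℂ) - I * l)) *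
        ((c + I * l + I * α) /
          ((c + I * l - I * α) * ((c + I * l) ^ 2 + (k : ℂ) ^ 2) ^ (1 / 2 : ℂ)))) := by
  rw [impedanceIntegrand, evanescentRoot, mul_comm (l : ℂ) I]
  set w : ℂ := (((c : ℂ) + I * l) ^ 2 + (k : ℂ) ^ 2) ^ (1 / 2 : ℂ)
  have hy : Complex.exp (-(c + I * l) * y) =
      Complex.exp (-(c : ℂ) * y) * Complex.exp (-I * l * y) := by
    rw [← Complex.exp_add]
    ring_nf
  have hx : Complex.exp (I * x * w) =
      Complex.exp (-(l : ℂ) * x) * Complex.exp (I * x * (w - I * l)) := by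
    rw [← Complex.exp_add]
    congr 1
    linear_combination ((x : ℂ) * l) * I_sq
  rw [hy, hx]
  ring

theorem impedance_evanescent_contour_rotation_general (k α x y c : ℝ)
    (hx : 0 < x) (hy : 0 < y) (hc : max |α| k < c) :
    (∫ t in Set.Ioi c,
        Complex.exp (-(t : ℂ) * y) * Complex.exp (Complex.I * x * Real.sqrt (t ^ 2 + k ^ 2)) *
          (((t : ℂ) + Complex.I * α) /
            (((t : ℂ) - Complex.I * α) * (Real.sqrt (t ^ 2 + k ^ 2) : ℂ))))
      = Complex.I * Complex.exp (-(c : ℂ) * y) *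
          ∫ l in Set.Ioi (0 : ℝ),
            Complex.exp (-(l : ℂ) * x) * Complex.exp (-Complex.I * l * y) *
              Complex.exp (Complex.I * x *
                ((((c : ℂ) + Complex.I * l) ^ 2 + (k : ℂ) ^ 2) ^ (1 / 2 : ℂ)
                  - Complex.I * l)) *
              ((((c : ℂ) + Complex.I * l) + Complex.I * α) /
                ((((c : ℂ) + Complex.I * l) - Complex.I * α) *
                  ((((c : ℂ) + Complex.I * l) ^ 2 + (k : ℂ) ^ 2) ^ (1 / 2 : ℂ)))) := by
  have hc0 : 0 < c := (abs_nonneg α).trans_lt ((le_max_left _ _).trans_lt hc)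
  have hholo : DifferentiableOn ℂ (impedanceIntegrand k α x y) (Ici c ×ℂ Ici 0) := fun z hz =>
    (differentiableAt_impedanceIntegrand (hc0.trans_le (mem_reProdIm.mp hz).1) k α x y)
      |>.differentiableWithinAt
  calc _ = ∫ t in Ioi c, impedanceIntegrand k α x y t := by
        simp_rw [impedanceIntegrand_ofReal]
    _ = I * ∫ l in Ioi (0 : ℝ), impedanceIntegrand k α x y (c + l * I) :=
        ExpDecayOnQuadrant.integral_Ioi_eq_I_mul_integral_vertical
          (fun _ b ha _ => norm_impedanceIntegrand_le hx.le hc0 ha b) hx hy hholo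
    _ = _ := by
        simp_rw [impedanceIntegrand_vertical, integral_const_mul]
        ring

/-- Shifted evanescent integral for the impedance half-space Green's function: rotating
the contour from the horizontal ray `{t ≥ c}` to the vertical ray `{c + iλ : λ ≥ 0}`.
`(·)^(1/2 : ℂ)` denotes the principal branch of the complex square root. -/
theorem impedance_evanescent_contour_rotation (k α x y c : ℝ)
    (hk : 0 < k) (hx : 0 < x) (hy : 0 < y) (hc : max |α| k < c) :
    (∫ t in Set.Ioi c,
        Complex.exp (-(t : ℂ) * y) * Complex.exp (Complex.I * x * Real.sqrt (t ^ 2 + k ^ 2)) *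
          (((t : ℂ) + Complex.I * α) /
            (((t : ℂ) - Complex.I * α) * (Real.sqrt (t ^ 2 + k ^ 2) : ℂ))))
      = Complex.I * Complex.exp (-(c : ℂ) * y) *
          ∫ l in Set.Ioi (0 : ℝ),
            Complex.exp (-(l : ℂ) * x) * Complex.exp (-Complex.I * l * y) *
              Complex.exp (Complex.I * x *
                ((((c : ℂ) + Complex.I * l) ^ 2 + (k : ℂ) ^ 2) ^ (1 / 2 : ℂ)
                  - Complex.I * l)) *
              ((((c : ℂ) + Complex.I * l) + Complex.I * α) /
                ((((c : ℂ) + Complex.I * l) - Complex.I * α) *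
                  ((((c : ℂ) + Complex.I * l) ^ 2 + (k : ℂ) ^ 2) ^ (1 / 2 : ℂ)))) :=
  impedance_evanescent_contour_rotation_general k α x y c hx hy hc
end
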